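/- Let (γ_n) be a positive decreasing sequence with γ_n → 0 and ∑ γ_n = ∞, and set s_{n,k} = ∑_{i=0}^{k} γ_{n+i}. Let q > 0 and let (y_k) be a sequence of nonnegative reals converging to 0. Then ∑_{k=0}^{t} γ_{n+k} e^{q(s_{n,k} - s_{n,t})} y_{n+k} → 0 as t → ∞. -/

import Mathlib

/-!
The weights `γ_{n+k} e^{q(s_k - s_t)}`, `k ≤ t`, form a Riemann sum for `∫_0^{s_t} e^{-qu} du`.
Comparing each term `g e^{q s}` with the increment of `e^{q s} / q` over a step of length `g ≤ M`
costs at most a factor `e^{qM}`, so the row sums telescope to at most `e^{qM}/q`, where `M` bounds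
`γ`. Since `s_t → ∞`, each column tends to zero, and a Toeplitz argument finishes the proof.
-/

open Filter Finset Real Topology

/-- Silverman–Toeplitz, in the form needed for null sequences. -/
theorem tendsto_sum_range_succ_mul_of_tendsto_zero {w : ℕ → ℕ → ℝ} {x : ℕ → ℝ} {C : ℝ}
    (hw : ∀ t k, 0 ≤ w t k) (hrow : ∀ t, ∑ k ∈ range (t + 1), w t k ≤ C)
    (hcol : ∀ k, Tendsto (fun t => w t k) atTop (𝓝 0)) (hx : Tendsto x atTop (𝓝 0)) :
    Tendsto (fun t => ∑ k ∈ range (t + 1), w t k * x k) atTop (𝓝 0) := by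
  refine Metric.tendsto_nhds.2 fun δ hδ => ?_
  obtain ⟨ε, hε, hCε⟩ := exists_pos_mul_lt (half_pos hδ) C
  obtain ⟨T, hT⟩ := eventually_atTop.1 (Metric.tendsto_nhds.1 hx ε hε)
  have hhead : Tendsto (fun t => ∑ k ∈ range T, w t k * |x k|) atTop (𝓝 0) := by
    simpa using tendsto_finsetSum (range T) fun k _ => (hcol k).mul_const |x k|
  filter_upwards [(Metric.tendsto_nhds.1 hhead) _ (half_pos hδ)] with t ht
  rw [Real.dist_eq, sub_zero, abs_of_nonneg (sum_nonneg fun k _ => mul_nonneg (hw t k)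
    (abs_nonneg (x k)))] at ht
  rw [Real.dist_eq, sub_zero]
  calc |∑ k ∈ range (t + 1), w t k * x k|
      ≤ ∑ k ∈ range (t + 1), w t k * |x k| :=
        (abs_sum_le_sum_abs _ _).trans_eq (sum_congr rfl fun k _ => by
          rw [abs_mul, abs_of_nonneg (hw t k)])
    _ = ∑ k ∈ (range (t + 1)).filter (· < T), w t k * |x k|
          + ∑ k ∈ (range (t + 1)).filter (¬ · < T), w t k * |x k| :=
        (sum_filter_add_sum_filter_not _ _ _).symm
    _ ≤ ∑ k ∈ range T, w t k * |x k| + ∑ k ∈ range (t + 1), w t k * ε := by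
        refine add_le_add (sum_le_sum_of_subset_of_nonneg (fun k hk => ?_) fun k _ _ => ?_)
          ((sum_le_sum fun k hk => ?_).trans (sum_le_sum_of_subset_of_nonneg (filter_subset _ _)
            fun k _ _ => mul_nonneg (hw t k) hε.le))
        · exact mem_range.2 (mem_filter.1 hk).2
        · exact mul_nonneg (hw t k) (abs_nonneg (x k))
        · have hxk := hT k (not_lt.1 (mem_filter.1 hk).2)
          rw [Real.dist_eq, sub_zero] at hxk
          exact mul_le_mul_of_nonneg_left hxk.le (hw t k)
    _ < δ / 2 + C * ε := by
        rw [← sum_mul]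
        exact add_lt_add_of_lt_of_le ht (mul_le_mul_of_nonneg_right (hrow t) hε.le)
    _ < δ := by linarith

theorem mul_exp_le_exp_div_mul_exp_sub_one {q g M : ℝ} (hq : 0 < q) (hg : 0 ≤ g)
    (hgM : g ≤ M) : g * exp (q * g) ≤ exp (q * M) / q * (exp (q * g) - 1) := by
  have hlin : q * g ≤ exp (q * g) - 1 := by linarith [add_one_le_exp (q * g)]
  calc g * exp (q * g) ≤ g * exp (q * M) := by gcongr
    _ = exp (q * M) / q * (q * g) := by field_simp
    _ ≤ exp (q * M) / q * (exp (q * g) - 1) := by gcongr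

theorem sum_range_mul_exp_partialSum_le {g : ℕ → ℝ} {q M : ℝ} (hq : 0 < q)
    (hg : ∀ k, 0 ≤ g k) (hgM : ∀ k, g k ≤ M) (t : ℕ) :
    ∑ k ∈ range t, g k * exp (q * ∑ i ∈ range (k + 1), g i)
      ≤ exp (q * M) / q * (exp (q * ∑ i ∈ range t, g i) - 1) := by
  set S : ℕ → ℝ := fun m => ∑ i ∈ range m, g i
  calc ∑ k ∈ range t, g k * exp (q * S (k + 1))
      ≤ ∑ k ∈ range t, exp (q * M) / q * (exp (q * S (k + 1)) - exp (q * S k)) := by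
        refine sum_le_sum fun k _ => ?_
        have hsplit : exp (q * S (k + 1)) = exp (q * S k) * exp (q * g k) := by
          simp only [S, sum_range_succ, mul_add, exp_add]
        have := mul_le_mul_of_nonneg_left
          (mul_exp_le_exp_div_mul_exp_sub_one hq (hg k) (hgM k)) (exp_pos (q * S k)).le
        rw [hsplit]
        linarith
    _ = exp (q * M) / q * (exp (q * S t) - 1) := by
        rw [← mul_sum, sum_range_sub (fun m => exp (q * S m))]
        simp [S]

theorem sum_range_succ_mul_exp_sub_partialSum_le {g : ℕ → ℝ} {q M : ℝ} (hq : 0 < q)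
    (hg : ∀ k, 0 ≤ g k) (hgM : ∀ k, g k ≤ M) (t : ℕ) :
    ∑ k ∈ range (t + 1),
        g k * exp (q * (∑ i ∈ range (k + 1), g i - ∑ i ∈ range (t + 1), g i))
      ≤ exp (q * M) / q := by
  set S : ℕ → ℝ := fun m => ∑ i ∈ range m, g i
  have hC : 0 ≤ exp (q * M) / q := by positivity
  calc ∑ k ∈ range (t + 1), g k * exp (q * (S (k + 1) - S (t + 1)))
      = (∑ k ∈ range (t + 1), g k * exp (q * S (k + 1))) * exp (-(q * S (t + 1))) := by
        rw [sum_mul]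
        refine sum_congr rfl fun k _ => ?_
        rw [mul_assoc, ← exp_add, mul_sub, sub_eq_add_neg]
    _ ≤ exp (q * M) / q * (exp (q * S (t + 1)) - 1) * exp (-(q * S (t + 1))) := by
        gcongr
        exact sum_range_mul_exp_partialSum_le hq hg hgM (t + 1)
    _ = exp (q * M) / q * (1 - exp (-(q * S (t + 1)))) := by
        rw [mul_assoc, sub_mul, ← exp_add, add_neg_cancel, exp_zero, one_mul]
    _ ≤ exp (q * M) / q := mul_le_of_le_one_right hC (by linarith [exp_pos (-(q * S (t + 1)))])

theorem tendsto_sum_range_add_atTop {γ : ℕ → ℝ}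
    (hdiv : Tendsto (fun m => ∑ i ∈ range m, γ i) atTop atTop) (n : ℕ) :
    Tendsto (fun m => ∑ i ∈ range m, γ (n + i)) atTop atTop := by
  have hshift : ∀ m, ∑ i ∈ range m, γ (n + i)
      = ∑ i ∈ range (m + n), γ i - ∑ i ∈ range n, γ i := fun m => by
    rw [add_comm m n, sum_range_add]; ring
  simp only [hshift]
  exact tendsto_atTop_add_const_right _ _ (hdiv.comp (tendsto_add_atTop_nat n))

theorem stmt1_general (γ : ℕ → ℝ) (hpos : ∀ k, 0 < γ k)
    (hγ0 : Tendsto γ atTop (nhds 0))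
    (hdiv : Tendsto (fun m => ∑ i ∈ Finset.range m, γ i) atTop atTop)
    (n : ℕ) (s : ℕ → ℝ) (hs : ∀ k, s k = ∑ i ∈ Finset.range (k + 1), γ (n + i))
    (q : ℝ) (hq : 0 < q)
    (y : ℕ → ℝ) (hy0 : Tendsto y atTop (nhds 0)) :
    Tendsto (fun t => ∑ k ∈ Finset.range (t + 1),
      γ (n + k) * Real.exp (q * (s k - s t)) * y (n + k)) atTop (nhds 0) := by
  obtain ⟨M, hM⟩ := hγ0.bddAbove_range
  obtain rfl : s = fun k => ∑ i ∈ range (k + 1), γ (n + i) := funext hs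
  have hs_top : Tendsto (fun t => ∑ i ∈ range (t + 1), γ (n + i)) atTop atTop :=
    (tendsto_sum_range_add_atTop hdiv n).comp (tendsto_add_atTop_nat 1)
  have hcol : ∀ k, Tendsto (fun t => γ (n + k) *
      exp (q * (∑ i ∈ range (k + 1), γ (n + i) - ∑ i ∈ range (t + 1), γ (n + i))))
      atTop (𝓝 0) := fun k => by
    have hexp := (tendsto_atBot_add_const_left _ (∑ i ∈ range (k + 1), γ (n + i))
      (tendsto_neg_atTop_atBot.comp hs_top)).const_mul_atBot hq
    simpa [← sub_eq_add_neg] using (tendsto_exp_atBot.comp hexp).const_mul (γ (n + k))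
  exact tendsto_sum_range_succ_mul_of_tendsto_zero
    (fun t k => mul_nonneg (hpos _).le (exp_pos _).le)
    (sum_range_succ_mul_exp_sub_partialSum_le hq (fun k => (hpos _).le)
      (fun k => hM ⟨n + k, rfl⟩))
    hcol (by simpa only [add_comm] using (tendsto_add_atTop_iff_nat n).2 hy0)

/-- Step 1 of Proposition A.1 (scalar core): a weighted exponential average of a
vanishing nonnegative sequence vanishes.  Here `s k = s_{n,k} = ∑_{i=0}^k γ_{n+i}`. -/
theorem stmt1 (γ : ℕ → ℝ) (hpos : ∀ k, 0 < γ k) (hdec : ∀ k, γ (k + 1) ≤ γ k)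
    (hγ0 : Tendsto γ atTop (nhds 0))
    (hdiv : Tendsto (fun m => ∑ i ∈ Finset.range m, γ i) atTop atTop)
    (n : ℕ) (s : ℕ → ℝ) (hs : ∀ k, s k = ∑ i ∈ Finset.range (k + 1), γ (n + i))
    (q : ℝ) (hq : 0 < q)
    (y : ℕ → ℝ) (hy : ∀ k, 0 ≤ y k) (hy0 : Tendsto y atTop (nhds 0)) :
    Tendsto (fun t => ∑ k ∈ Finset.range (t + 1),
      γ (n + k) * Real.exp (q * (s k - s t)) * y (n + k)) atTop (nhds 0) :=
  stmt1_general γ hpos hγ0 hdiv n s hs q hq y hy0
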